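/- arXiv:2503.11574 — 5 statements merged into one kernel-verified Lean document; each statement's English description precedes it below -/
import Mathlib

section
/- Let n ≥ 2 and let φ₁, φ₂ : ℝⁿ → ℝ be C^∞ functions. Suppose that for every y ∈ ℝⁿ the Hessian matrix (∂²φ₂/∂yᵢ∂yⱼ(y))_{1≤i,j≤n} is invertible, and suppose there is a C^∞ function c : ℝⁿ → ℝ such that ∂²φ₁/∂yᵢ∂yⱼ(y) = c(y)·∂²φ₂/∂yᵢ∂yⱼ(y) for all indices 1 ≤ i,j ≤ n and all y ∈ ℝⁿ. Then c is a constant function: there exists a real number c₀ with c(y) = c₀ for all y ∈ ℝⁿ. -/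
/-- Second partial derivative `∂²φ/∂yᵢ∂yⱼ` of a function `φ : ℝⁿ → ℝ`. -/
noncomputable def partial2 {n : ℕ} (φ : (Fin n → ℝ) → ℝ) (i j : Fin n)
    (y : Fin n → ℝ) : ℝ :=
  fderiv ℝ (fun z => fderiv ℝ φ z (Pi.single j 1)) y (Pi.single i 1)

private lemma smooth_pd {n : ℕ} {f : (Fin n → ℝ) → ℝ} (hf : ContDiff ℝ (⊤ : ℕ∞) f)
    (v : Fin n → ℝ) : ContDiff ℝ (⊤ : ℕ∞) (fun z => fderiv ℝ f z v) :=
  (hf.fderiv_right (by simp)).clm_apply contDiff_const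

private lemma schwarz {n : ℕ} {f : (Fin n → ℝ) → ℝ} (hf : ContDiff ℝ (⊤ : ℕ∞) f)
    (y v w : Fin n → ℝ) :
    fderiv ℝ (fun z => fderiv ℝ f z w) y v = fderiv ℝ (fun z => fderiv ℝ f z v) y w := by
  have h2 : IsSymmSndFDerivAt ℝ f y := hf.contDiffAt.isSymmSndFDerivAt (by
    rw [minSmoothness_of_isRCLikeNormedField]; exact WithTop.coe_le_coe.mpr (le_top : (2 : ℕ∞) ≤ ⊤))
  have hd : DifferentiableAt ℝ (fderiv ℝ f) y :=
    ((hf.fderiv_right (m := (⊤ : ℕ∞)) (by simp)).differentiable (by simp)).differentiableAt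
  have e : ∀ u : Fin n → ℝ,
      fderiv ℝ (fun z => fderiv ℝ f z u) y = (fderiv ℝ (fderiv ℝ f) y).flip u := by
    intro u
    have := fderiv_clm_apply (c := fderiv ℝ f) (u := fun _ => u) hd (differentiableAt_const u)
    simpa using this
  rw [e, e]
  exact h2.eq v w

/-- If `φ₂` has an invertible Hessian everywhere and the Hessian of `φ₁` is a smooth scalar
multiple `c(y)` of the Hessian of `φ₂`, then `c` is constant. -/
theorem constant_factor_of_proportional_hessians
    (n : ℕ) (hn : 2 ≤ n)
    (φ₁ φ₂ : (Fin n → ℝ) → ℝ) (c : (Fin n → ℝ) → ℝ)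
    (hφ₁ : ContDiff ℝ (⊤ : ℕ∞) φ₁) (hφ₂ : ContDiff ℝ (⊤ : ℕ∞) φ₂) (hc : ContDiff ℝ (⊤ : ℕ∞) c)
    (hHess : ∀ y : Fin n → ℝ,
      (Matrix.of fun i j : Fin n => partial2 φ₂ i j y).det ≠ 0)
    (hprop : ∀ (y : Fin n → ℝ) (i j : Fin n),
      partial2 φ₁ i j y = c y * partial2 φ₂ i j y) :
    ∃ c₀ : ℝ, ∀ y : Fin n → ℝ, c y = c₀ := by
  -- smoothness of second partials
  have hsm : ∀ (φ : (Fin n → ℝ) → ℝ), ContDiff ℝ (⊤ : ℕ∞) φ → ∀ i j : Fin n,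
      ContDiff ℝ (⊤ : ℕ∞) (fun y => partial2 φ i j y) := fun φ hφ i j =>
    smooth_pd (smooth_pd hφ (Pi.single j 1)) (Pi.single i 1)
  -- symmetry of third derivatives in the first two indices
  have pd3 : ∀ (φ : (Fin n → ℝ) → ℝ), ContDiff ℝ (⊤ : ℕ∞) φ → ∀ (i j k : Fin n) (y : Fin n → ℝ),
      fderiv ℝ (fun z => partial2 φ i j z) y (Pi.single k 1)
        = fderiv ℝ (fun z => partial2 φ k j z) y (Pi.single i 1) := by
    intro φ hφ i j k y
    exact schwarz (smooth_pd hφ (Pi.single j 1)) y (Pi.single k 1) (Pi.single i 1)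
  -- key identity: ∂ₖc · Hᵢⱼ = ∂ᵢc · Hₖⱼ
  have key : ∀ (y : Fin n → ℝ) (i j k : Fin n),
      fderiv ℝ c y (Pi.single k 1) * partial2 φ₂ i j y
        = fderiv ℝ c y (Pi.single i 1) * partial2 φ₂ k j y := by
    intro y i j k
    have hdc : DifferentiableAt ℝ c y := (hc.differentiable (by simp)).differentiableAt
    have hprod : ∀ (i' : Fin n) (k' : Fin n),
        fderiv ℝ (fun z => partial2 φ₁ i' j z) y (Pi.single k' 1)
          = fderiv ℝ c y (Pi.single k' 1) * partial2 φ₂ i' j y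
            + c y * fderiv ℝ (fun z => partial2 φ₂ i' j z) y (Pi.single k' 1) := by
      intro i' k'
      have h1 : (fun z => partial2 φ₁ i' j z) = fun z => c z * partial2 φ₂ i' j z := by
        funext z; exact hprop z i' j
      have hd2 : DifferentiableAt ℝ (fun z => partial2 φ₂ i' j z) y :=
        ((hsm φ₂ hφ₂ i' j).differentiable (by simp)).differentiableAt
      rw [h1, fderiv_fun_mul hdc hd2]
      simp only [ContinuousLinearMap.add_apply, ContinuousLinearMap.smul_apply, smul_eq_mul]
      ring
    have e1 := hprod i k
    have e2 := hprod k i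
    rw [pd3 φ₁ hφ₁ i j k y, e2, pd3 φ₂ hφ₂ i j k y] at e1
    linarith [e1]
  -- the derivative of c vanishes everywhere
  have hgrad : ∀ (y : Fin n → ℝ) (k : Fin n), fderiv ℝ c y (Pi.single k 1) = 0 := by
    intro y k
    by_contra hk
    have hrow : ∀ i, (Matrix.of fun i j : Fin n => partial2 φ₂ i j y) i
        = (fderiv ℝ c y (Pi.single i 1) / fderiv ℝ c y (Pi.single k 1))
            • (Matrix.of fun i j : Fin n => partial2 φ₂ i j y) k := by
      intro i; funext j
      simp only [Matrix.of_apply, Pi.smul_apply, smul_eq_mul]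
      rw [div_mul_eq_mul_div, eq_div_iff hk]
      linear_combination key y i j k
    obtain ⟨a, ha⟩ : ∃ a : Fin n, a ≠ k := by
      have : 1 < Fintype.card (Fin n) := by rw [Fintype.card_fin]; omega
      exact Fintype.exists_ne_of_one_lt_card this k
    set H : Matrix (Fin n) (Fin n) ℝ := Matrix.of fun i j : Fin n => partial2 φ₂ i j y with hH
    have hdet : H.det = 0 := by
      have h1 : H = H.updateRow a ((fderiv ℝ c y (Pi.single a 1) / fderiv ℝ c y (Pi.single k 1)) • H k) := by
        rw [← hrow a, Matrix.updateRow_eq_self]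
      rw [h1, Matrix.det_updateRow_smul]
      have h2 : (H.updateRow a (H k)) a = (H.updateRow a (H k)) k := by
        rw [Matrix.updateRow_self, Matrix.updateRow_ne (Ne.symm ha)]
      rw [Matrix.det_zero_of_row_eq ha h2, mul_zero]
    exact hHess y hdet
  have hzero : ∀ y : Fin n → ℝ, fderiv ℝ c y = 0 := by
    intro y
    ext x
    have hx : x = ∑ i : Fin n, x i • (Pi.single i 1 : Fin n → ℝ) := by
      funext j
      simp [Finset.sum_apply, Pi.single_apply, mul_ite, Finset.sum_ite_eq']
    rw [hx]
    simp [map_sum, map_smul, hgrad y]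
  refine ⟨c 0, fun y => ?_⟩
  exact is_const_of_fderiv_eq_zero (hc.differentiable (by simp)) hzero y 0
end

section
/- Let n ≥ 2 and let ψ : ℝ × ℝⁿ → ℝ be a C^∞ function, with variables written (t, y), t ∈ ℝ, y ∈ ℝⁿ. Suppose that for every (t, y) the n×n matrix (∂ₜ∂_{yᵢ}∂_{yⱼ}ψ(t, y))_{1≤i,j≤n} is invertible, and suppose there is a C^∞ function c : ℝ × ℝⁿ → ℝ such that ∂ₜ²∂_{yᵢ}∂_{yⱼ}ψ(t, y) = c(t, y)·∂ₜ∂_{yᵢ}∂_{yⱼ}ψ(t, y) for all 1 ≤ i,j ≤ n and all (t, y). Then c does not depend on y: c(t, y) = c(t, y′) for all t ∈ ℝ and all y, y′ ∈ ℝⁿ. -/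
/-- Partial derivative `∂ₜ` in the first variable of `f : ℝ × ℝⁿ → ℝ`. -/
noncomputable def dt {n : ℕ} (f : ℝ × (Fin n → ℝ) → ℝ) : ℝ × (Fin n → ℝ) → ℝ :=
  fun p => fderiv ℝ f p ((1 : ℝ), (0 : Fin n → ℝ))

/-- Partial derivative `∂_{yᵢ}` in the `i`-th coordinate of the second variable. -/
noncomputable def dy {n : ℕ} (i : Fin n) (f : ℝ × (Fin n → ℝ) → ℝ) : ℝ × (Fin n → ℝ) → ℝ :=
  fun p => fderiv ℝ f p ((0 : ℝ), Pi.single i 1)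

section Aux

variable {E : Type*} [NormedAddCommGroup E] [NormedSpace ℝ E]

private lemma contDiff_D {f : E → ℝ} (hf : ContDiff ℝ (⊤ : ℕ∞) f) (v : E) :
    ContDiff ℝ (⊤ : ℕ∞) (fun p => fderiv ℝ f p v) :=
  (hf.fderiv_right (by simp)).clm_apply contDiff_const

private lemma D_eval {f : E → ℝ} (hf : ContDiff ℝ (⊤ : ℕ∞) f) (v : E) (p : E) :
    fderiv ℝ (fun q => fderiv ℝ f q v) p
      = (ContinuousLinearMap.apply ℝ ℝ v).comp (fderiv ℝ (fderiv ℝ f) p) := by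
  have h : (fun q => fderiv ℝ f q v) = (ContinuousLinearMap.apply ℝ ℝ v) ∘ (fderiv ℝ f) := rfl
  rw [h, fderiv_comp]
  · simp
  · exact (ContinuousLinearMap.apply ℝ ℝ v).differentiableAt
  · exact ((hf.fderiv_right (m := (⊤ : ℕ∞)) (by simp)).differentiable (by simp)).differentiableAt

private lemma D_comm {f : E → ℝ} (hf : ContDiff ℝ (⊤ : ℕ∞) f) (v w : E) :
    (fun p => fderiv ℝ (fun q => fderiv ℝ f q v) p w)
      = (fun p => fderiv ℝ (fun q => fderiv ℝ f q w) p v) := by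
  funext p
  rw [D_eval hf v p, D_eval hf w p]
  simp only [ContinuousLinearMap.coe_comp', Function.comp_apply,
    ContinuousLinearMap.apply_apply]
  exact second_derivative_symmetric
    (fun y => ((hf.differentiable (by simp)) y).hasFDerivAt)
    (((hf.fderiv_right (m := (⊤ : ℕ∞)) (by simp)).differentiable (by simp) p).hasFDerivAt) w v

end Aux

private lemma dt_smooth {n : ℕ} {f : ℝ × (Fin n → ℝ) → ℝ} (hf : ContDiff ℝ (⊤ : ℕ∞) f) :
    ContDiff ℝ (⊤ : ℕ∞) (dt f) := contDiff_D hf _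

private lemma dy_smooth {n : ℕ} {f : ℝ × (Fin n → ℝ) → ℝ} (hf : ContDiff ℝ (⊤ : ℕ∞) f) (i : Fin n) :
    ContDiff ℝ (⊤ : ℕ∞) (dy i f) := contDiff_D hf _

private lemma dy_dt_comm {n : ℕ} {f : ℝ × (Fin n → ℝ) → ℝ} (hf : ContDiff ℝ (⊤ : ℕ∞) f) (i : Fin n) :
    dy i (dt f) = dt (dy i f) := D_comm hf _ _

private lemma dy_dy_comm {n : ℕ} {f : ℝ × (Fin n → ℝ) → ℝ} (hf : ContDiff ℝ (⊤ : ℕ∞) f)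
    (i j : Fin n) : dy i (dy j f) = dy j (dy i f) := D_comm hf _ _

/-- If the matrix `∂ₜ∇²_yψ` is invertible everywhere and
`∂ₜ²∇²_yψ(t,y) = c(t,y) ∂ₜ∇²_yψ(t,y)`, then `c` does not depend on `y`. -/
theorem factor_depends_only_on_t
    (n : ℕ) (hn : 2 ≤ n)
    (ψ : ℝ × (Fin n → ℝ) → ℝ) (c : ℝ × (Fin n → ℝ) → ℝ)
    (hψ : ContDiff ℝ (⊤ : ℕ∞) ψ) (hc : ContDiff ℝ (⊤ : ℕ∞) c)
    (hrank : ∀ p : ℝ × (Fin n → ℝ),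
      (Matrix.of fun i j : Fin n => dt (dy i (dy j ψ)) p).det ≠ 0)
    (hprop : ∀ (p : ℝ × (Fin n → ℝ)) (i j : Fin n),
      dt (dt (dy i (dy j ψ))) p = c p * dt (dy i (dy j ψ)) p) :
    ∀ (t : ℝ) (y y' : Fin n → ℝ), c (t, y) = c (t, y') := by
  -- smoothness of all the iterated derivatives we need
  have h1 : ∀ j, ContDiff ℝ (⊤ : ℕ∞) (dy j ψ) := fun j => dy_smooth hψ j
  have h2 : ∀ i j, ContDiff ℝ (⊤ : ℕ∞) (dy i (dy j ψ)) := fun i j => dy_smooth (h1 j) i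
  have h3 : ∀ i j, ContDiff ℝ (⊤ : ℕ∞) (dt (dy i (dy j ψ))) := fun i j => dt_smooth (h2 i j)
  -- commuting a `dy k` through `dt ∘ dt ∘ dy i ∘ dy j`
  have comm4 : ∀ i j k, dy k (dt (dt (dy i (dy j ψ)))) = dt (dt (dy i (dy j (dy k ψ)))) := by
    intro i j k
    rw [dy_dt_comm (h3 i j) k, dy_dt_comm (h2 i j) k, dy_dy_comm (h1 j) k i,
      dy_dy_comm hψ k j]
  have comm2 : ∀ i j k, dy k (dt (dy i (dy j ψ))) = dt (dy i (dy j (dy k ψ))) := by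
    intro i j k
    rw [dy_dt_comm (h2 i j) k, dy_dy_comm (h1 j) k i, dy_dy_comm hψ k j]
  -- differentiate the hypothesis `hprop` in the direction `yₖ`
  have keyE : ∀ (p) (i j k : Fin n),
      dt (dt (dy i (dy j (dy k ψ)))) p
        = dy k c p * dt (dy i (dy j ψ)) p + c p * dt (dy i (dy j (dy k ψ))) p := by
    intro p i j k
    have hfun : dt (dt (dy i (dy j ψ))) = fun q => c q * dt (dy i (dy j ψ)) q := by
      funext q; exact hprop q i j
    have hL : dy k (dt (dt (dy i (dy j ψ)))) p
        = dy k (fun q => c q * dt (dy i (dy j ψ)) q) p := by rw [hfun]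
    rw [comm4 i j k] at hL
    have hR : dy k (fun q => c q * dt (dy i (dy j ψ)) q) p
        = dy k c p * dt (dy i (dy j ψ)) p + c p * dy k (dt (dy i (dy j ψ))) p := by
      have hdc : DifferentiableAt ℝ c p := (hc.differentiable (by simp)).differentiableAt
      have hdg : DifferentiableAt ℝ (dt (dy i (dy j ψ))) p :=
        ((h3 i j).differentiable (by simp)).differentiableAt
      have hm : fderiv ℝ (fun q => c q * dt (dy i (dy j ψ)) q) p = _ := fderiv_mul hdc hdg
      simp only [dy, hm, ContinuousLinearMap.add_apply, ContinuousLinearMap.smul_apply,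
        smul_eq_mul]
      ring
    rw [hR, comm2 i j k] at hL
    exact hL
  -- the fundamental relation : (∂ₖ c) Mᵢⱼ = (∂ⱼ c) Mᵢₖ
  have rel : ∀ (p) (i j k : Fin n),
      dy k c p * dt (dy i (dy j ψ)) p = dy j c p * dt (dy i (dy k ψ)) p := by
    intro p i j k
    have e1 := keyE p i j k
    have e2 := keyE p i k j
    have hsym : dy j (dy k ψ) = dy k (dy j ψ) := dy_dy_comm hψ j k
    rw [← hsym] at e2
    have h := e1.symm.trans e2
    linarith [h]
  -- hence all `y`-derivatives of `c` vanish
  have keyzero : ∀ (p) (k : Fin n), dy k c p = 0 := by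
    intro p k
    have h0 : (0 : ℕ) < n := by omega
    have h1n : (1 : ℕ) < n := by omega
    obtain ⟨j, hjk⟩ : ∃ j : Fin n, j ≠ k := by
      rcases eq_or_ne k ⟨0, h0⟩ with hk | hk
      · exact ⟨⟨1, h1n⟩, by simp [hk, Fin.ext_iff]⟩
      · exact ⟨⟨0, h0⟩, fun h => hk h.symm⟩
    set A : Matrix (Fin n) (Fin n) ℝ := Matrix.of fun i j : Fin n => dt (dy i (dy j ψ)) p
      with hAdef
    have hA : IsUnit A := (Matrix.isUnit_iff_isUnit_det A).2 (isUnit_iff_ne_zero.2 (hrank p))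
    have hinj : Function.Injective A.mulVec := Matrix.mulVec_injective_iff_isUnit.2 hA
    set u : Fin n → ℝ := Pi.single j (dy k c p) - Pi.single k (dy j c p) with hu
    have hmv : A.mulVec u = 0 := by
      funext i
      have hval : A.mulVec u i = dy k c p * A i j - dy j c p * A i k := by
        simp only [hu, Matrix.mulVec, dotProduct, Pi.sub_apply, mul_sub,
          Finset.sum_sub_distrib, Pi.single_apply]
        rw [Finset.sum_eq_single j, Finset.sum_eq_single k] <;>
          simp (config := {contextual := true}) [mul_comm, eq_comm]
      rw [hval]
      have hr := rel p i j k
      simp only [hAdef, Matrix.of_apply, Pi.zero_apply]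
      linarith [hr]
    have hu0 : u = 0 := hinj (by rw [hmv, Matrix.mulVec_zero])
    have hj := congrFun hu0 j
    simpa [hu, Pi.single_apply, hjk, hjk.symm] using hj
  -- conclude : `c (t, ·)` is constant
  intro t y y'
  set g : (Fin n → ℝ) → ℝ := fun z => c (t, z) with hg
  have hgd : ∀ z, HasFDerivAt g
      ((fderiv ℝ c (t, z)).comp (ContinuousLinearMap.inr ℝ ℝ (Fin n → ℝ))) z := by
    intro z
    exact ((hc.differentiable (by simp)) (t, z)).hasFDerivAt.comp z (hasFDerivAt_prodMk_right t z)
  have hgdiff : Differentiable ℝ g := fun z => (hgd z).differentiableAt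
  have hzero : ∀ z, fderiv ℝ g z = 0 := by
    intro z
    rw [(hgd z).fderiv]
    ext w
    simp only [ContinuousLinearMap.coe_comp', Function.comp_apply,
      ContinuousLinearMap.inr_apply, ContinuousLinearMap.zero_apply]
    have hw : ((0 : ℝ), w) = ∑ k : Fin n, (((0 : ℝ), (w k • (Pi.single k (1:ℝ) : Fin n → ℝ))) : ℝ × (Fin n → ℝ)) := by
      apply Prod.ext
      · simp [Prod.fst_sum]
      · simp only [Prod.snd_sum]
        funext l
        simp [Finset.sum_apply, Pi.single_apply]
    rw [hw, map_sum]
    have hterm : ∀ k : Fin n,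
        fderiv ℝ c (t, z) (((0 : ℝ), (w k • (Pi.single k (1:ℝ) : Fin n → ℝ))) : ℝ × (Fin n → ℝ)) = 0 := by
      intro k
      have heq : (((0 : ℝ), (w k • (Pi.single k (1:ℝ) : Fin n → ℝ))) : ℝ × (Fin n → ℝ))
          = w k • (((0 : ℝ), Pi.single k (1:ℝ)) : ℝ × (Fin n → ℝ)) := by
        rw [Prod.smul_mk, smul_zero]
      rw [heq, map_smul]
      have hk0 := keyzero (t, z) k
      simp only [dy] at hk0
      rw [hk0, smul_zero]
    exact Finset.sum_eq_zero (fun k _ => hterm k)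
  exact is_const_of_fderiv_eq_zero hgdiff hzero y y'
end

section
/- Let n ≥ 1, let ψ : ℝ × ℝⁿ → ℝ and c : ℝ → ℝ be C^∞ functions such that ∂ₜ²∂_{yᵢ}ψ(t, y) = c(t)·∂ₜ∂_{yᵢ}ψ(t, y) for every 1 ≤ i ≤ n and every (t, y) ∈ ℝ × ℝⁿ. Let α : ℝ → ℝ be a C^∞ function satisfying α″(t) + c(α(t))·(α′(t))² = 0 for all t ∈ ℝ. Then for every 1 ≤ i ≤ n and every y ∈ ℝⁿ, the function t ↦ ∂_{yᵢ}ψ(α(t), y) has identically vanishing second derivative: d²/dt² [∂_{yᵢ}ψ(α(t), y)] = 0 for all t ∈ ℝ. -/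
lemma dt_contDiff {n : ℕ} (f : ℝ × (Fin n → ℝ) → ℝ) (hf : ContDiff ℝ (⊤ : ℕ∞) f) :
    ContDiff ℝ (⊤ : ℕ∞) (dt f) :=
  (hf.fderiv_right (by simp)).clm_apply contDiff_const

lemma dy_contDiff {n : ℕ} (i : Fin n) (f : ℝ × (Fin n → ℝ) → ℝ) (hf : ContDiff ℝ (⊤ : ℕ∞) f) :
    ContDiff ℝ (⊤ : ℕ∞) (dy i f) :=
  (hf.fderiv_right (by simp)).clm_apply contDiff_const

lemma key {n : ℕ} (h : ℝ × (Fin n → ℝ) → ℝ) (hh : ContDiff ℝ (⊤ : ℕ∞) h) (α : ℝ → ℝ)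
    (hα : ContDiff ℝ (⊤ : ℕ∞) α) (y : Fin n → ℝ) (t : ℝ) :
    deriv (fun s => h (α s, y)) t = deriv α t * dt h (α t, y) := by
  have hα' : HasDerivAt α (deriv α t) t :=
    ((hα.differentiable (by simp)) t).hasDerivAt
  have hcurve : HasDerivAt (fun s => (α s, y)) ((deriv α t, (0 : Fin n → ℝ))) t :=
    hα'.prodMk (hasDerivAt_const t y)
  have hF : HasFDerivAt h (fderiv ℝ h (α t, y)) (α t, y) :=
    ((hh.differentiable (by simp)) _).hasFDerivAt
  have hcomp := hF.comp_hasDerivAt t hcurve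
  rw [show (fun s => h (α s, y)) = h ∘ (fun s => (α s, y)) from rfl, hcomp.deriv]
  have : ((deriv α t, (0 : Fin n → ℝ))) = deriv α t • ((1 : ℝ), (0 : Fin n → ℝ)) := by
    simp [Prod.smul_def]
  rw [this, (fderiv ℝ h (α t, y)).map_smul]
  rfl


/-- If `∂ₜ²∂_{yᵢ}ψ = c(t)·∂ₜ∂_{yᵢ}ψ` and `α'' + c(α)(α')² = 0`, then
`t ↦ ∂_{yᵢ}ψ(α(t), y)` has vanishing second derivative. -/
theorem straightened_second_derivative_vanishes
    (n : ℕ) (hn : 1 ≤ n)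
    (ψ : ℝ × (Fin n → ℝ) → ℝ) (c : ℝ → ℝ) (α : ℝ → ℝ)
    (hψ : ContDiff ℝ (⊤ : ℕ∞) ψ) (hc : ContDiff ℝ (⊤ : ℕ∞) c) (hα : ContDiff ℝ (⊤ : ℕ∞) α)
    (hprop : ∀ (i : Fin n) (p : ℝ × (Fin n → ℝ)),
      dt (dt (dy i ψ)) p = c p.1 * dt (dy i ψ) p)
    (hode : ∀ t : ℝ, deriv (deriv α) t + c (α t) * (deriv α t) ^ 2 = 0) :
    ∀ (i : Fin n) (y : Fin n → ℝ) (t : ℝ),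
      deriv (deriv (fun s => dy i ψ (α s, y))) t = 0 := by
  intro i y t
  set g := dy i ψ with hg
  have hgs : ContDiff ℝ (⊤ : ℕ∞) g := dy_contDiff i ψ hψ
  have hdtg : ContDiff ℝ (⊤ : ℕ∞) (dt g) := dt_contDiff g hgs
  have h1 : deriv (fun s => g (α s, y)) = fun s => deriv α s * dt g (α s, y) := by
    funext s; exact key g hgs α hα y s
  rw [h1]
  have hα' : ContDiff ℝ ((⊤ : ℕ∞) : WithTop ℕ∞) (deriv α) :=
    (contDiff_infty_iff_deriv.mp (hα.of_le (by simp))).2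
  have hd1 : DifferentiableAt ℝ (deriv α) t := (hα'.differentiable (by simp)) t
  have hcomp : ContDiff ℝ (⊤ : ℕ∞) (fun s => dt g (α s, y)) :=
    hdtg.comp (hα.prodMk contDiff_const)
  have hd2 : DifferentiableAt ℝ (fun s => dt g (α s, y)) t :=
    (hcomp.differentiable (by simp)) t
  rw [deriv_fun_mul hd1 hd2, key (dt g) hdtg α hα y t, hprop i (α t, y)]
  have h0 := hode t
  simp only [← hg]
  linear_combination (dt g (α t, y)) * h0
end

section
/- Let n ≥ 1, and let ψ : ℝ × ℝⁿ → ℝ and c : ℝ → ℝ be C^∞ functions such that ∂ₜ²∂_{yᵢ}ψ(t, y) = c(t)·∂ₜ∂_{yᵢ}ψ(t, y) for every 1 ≤ i ≤ n and every (t, y) ∈ ℝ × ℝⁿ. Then there exist ε > 0, a C^∞ function α : (−ε, ε) → ℝ with α(0) = 0 and α′(t) ≠ 0 for all |t| < ε, and C^∞ functions h, q : ℝⁿ → ℝ and f : (−ε, ε) → ℝ, such that ψ(α(t), y) = t·h(y) + q(y) + f(t) for all t ∈ (−ε, ε) and all y ∈ ℝⁿ. -/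
open scoped ContDiff Topology NNReal ENNReal
open Filter Set

lemma contDiff_top_of_hasDerivAt {g F : ℝ → ℝ} (hg : ContDiff ℝ (⊤ : ℕ∞) g)
    (hF : ∀ t, HasDerivAt F (g t) t) : ContDiff ℝ (⊤ : ℕ∞) F := by
  have hF' : deriv F = g := funext fun t => (hF t).deriv
  rw [contDiff_infty_iff_deriv]
  exact ⟨fun t => (hF t).differentiableAt, by rwa [hF']⟩

lemma hasDerivAt_intervalIntegral {g : ℝ → ℝ} (hg : Continuous g) (t : ℝ) :
    HasDerivAt (fun u => ∫ s in (0:ℝ)..u, g s) (g t) t :=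
  intervalIntegral.integral_hasDerivAt_right (hg.intervalIntegrable 0 t)
    (hg.stronglyMeasurableAtFilter _ _) hg.continuousAt

lemma contDiff_primitive {g : ℝ → ℝ} (hg : ContDiff ℝ (⊤ : ℕ∞) g) :
    ContDiff ℝ (⊤ : ℕ∞) (fun u => ∫ s in (0:ℝ)..u, g s) :=
  contDiff_top_of_hasDerivAt hg (fun t => hasDerivAt_intervalIntegral hg.continuous t)

lemma myHasDerivAt_fst {n : ℕ} (F : ℝ × (Fin n → ℝ) → ℝ) (hF : ContDiff ℝ (⊤ : ℕ∞) F) (t : ℝ)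
    (y : Fin n → ℝ) : HasDerivAt (fun s => F (s, y)) (dt F (t, y)) t := by
  have h1 : HasFDerivAt F (fderiv ℝ F (t, y)) (t, y) :=
    (hF.differentiable (by simp) (t, y)).hasFDerivAt
  have h2 : HasDerivAt (fun s : ℝ => (s, y)) ((1:ℝ), (0 : Fin n → ℝ)) t := by
    simpa using (hasDerivAt_id t).prodMk (hasDerivAt_const t y)
  exact h1.comp_hasDerivAt t h2

lemma myHasFDerivAt_snd {n : ℕ} (F : ℝ × (Fin n → ℝ) → ℝ) (hF : ContDiff ℝ (⊤ : ℕ∞) F) (t : ℝ)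
    (y : Fin n → ℝ) :
    HasFDerivAt (fun z => F (t, z))
      ((fderiv ℝ F (t, y)).comp (ContinuousLinearMap.inr ℝ ℝ (Fin n → ℝ))) y :=
  ((hF.differentiable (by simp) (t, y)).hasFDerivAt).comp y (hasFDerivAt_prodMk_right t y)

lemma contDiff_dt {n : ℕ} (F : ℝ × (Fin n → ℝ) → ℝ) (hF : ContDiff ℝ (⊤ : ℕ∞) F) :
    ContDiff ℝ (⊤ : ℕ∞) (dt F) :=
  (hF.fderiv_right (by simp)).clm_apply contDiff_const

lemma contDiff_dy {n : ℕ} (i : Fin n) (F : ℝ × (Fin n → ℝ) → ℝ) (hF : ContDiff ℝ (⊤ : ℕ∞) F) :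
    ContDiff ℝ (⊤ : ℕ∞) (dy i F) :=
  (hF.fderiv_right (by simp)).clm_apply contDiff_const

lemma dt_dy_comm {n : ℕ} (F : ℝ × (Fin n → ℝ) → ℝ) (hF : ContDiff ℝ (⊤ : ℕ∞) F) (i : Fin n)
    (p : ℝ × (Fin n → ℝ)) : dt (dy i F) p = dy i (dt F) p := by
  have hdF : Differentiable ℝ F := hF.differentiable (by simp)
  have hd2 : Differentiable ℝ (fderiv ℝ F) := (hF.fderiv_right (m := (⊤ : ℕ∞)) (by simp)).differentiable (by simp)
  have hsymm := second_derivative_symmetric (f := F) (f' := fderiv ℝ F)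
      (f'' := fderiv ℝ (fderiv ℝ F) p) (fun x => (hdF x).hasFDerivAt)
      ((hd2 p).hasFDerivAt)
  have e1 : dt (dy i F) p
      = fderiv ℝ (fderiv ℝ F) p ((1:ℝ), (0 : Fin n → ℝ)) ((0:ℝ), Pi.single i 1) := by
    have h : fderiv ℝ (fun q => fderiv ℝ F q ((0:ℝ), Pi.single i 1)) p
        = ((fderiv ℝ (fderiv ℝ F) p).flip ((0:ℝ), Pi.single i 1)) := by
      rw [fderiv_clm_apply (hd2 p) (differentiableAt_const _)]
      simp
    show fderiv ℝ (fun q => fderiv ℝ F q ((0:ℝ), Pi.single i 1)) p ((1:ℝ), (0 : Fin n → ℝ)) = _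
    rw [h]
    simp
  have e2 : dy i (dt F) p
      = fderiv ℝ (fderiv ℝ F) p ((0:ℝ), Pi.single i 1) ((1:ℝ), (0 : Fin n → ℝ)) := by
    have h : fderiv ℝ (fun q => fderiv ℝ F q ((1:ℝ), (0 : Fin n → ℝ))) p
        = ((fderiv ℝ (fderiv ℝ F) p).flip ((1:ℝ), (0 : Fin n → ℝ))) := by
      rw [fderiv_clm_apply (hd2 p) (differentiableAt_const _)]
      simp
    show fderiv ℝ (fun q => fderiv ℝ F q ((1:ℝ), (0 : Fin n → ℝ))) p ((0:ℝ), Pi.single i 1) = _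
    rw [h]
    simp
  rw [e1, e2]
  exact hsymm _ _

lemma ode_exp {c u B : ℝ → ℝ} (hu : ∀ t, HasDerivAt u (c t * u t) t)
    (hB : ∀ t, HasDerivAt B (c t) t) (hB0 : B 0 = 0) (t : ℝ) :
    u t = Real.exp (B t) * u 0 := by
  have hg : ∀ x, HasDerivAt (fun z => u z * Real.exp (-B z)) 0 x := by
    intro x
    have h1 : HasDerivAt (fun z => Real.exp (-B z)) (Real.exp (-B x) * (-c x)) x :=
      (hB x).neg.exp
    have h2 := (hu x).fun_mul h1
    refine h2.congr_deriv ?_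
    ring
  have key := is_const_of_deriv_eq_zero (fun x => (hg x).differentiableAt)
    (fun x => (hg x).deriv) t 0
  rw [hB0] at key
  simp only [neg_zero, Real.exp_zero, mul_one] at key
  have h3 : u t = u t * Real.exp (-B t) * Real.exp (B t) := by
    rw [mul_assoc, ← Real.exp_add]
    simp
  rw [h3, key]
  ring
/-- If `∂ₜ²∂_{yᵢ}ψ = c(t)·∂ₜ∂_{yᵢ}ψ`, then after a change of variables `t ↦ α(t)` the
function `ψ` splits as `ψ(α(t), y) = t·h(y) + q(y) + f(t)` locally near `t = 0`. -/
theorem straighten_translation_invariant_phase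
    (n : ℕ) (hn : 1 ≤ n)
    (ψ : ℝ × (Fin n → ℝ) → ℝ) (c : ℝ → ℝ)
    (hψ : ContDiff ℝ (⊤ : ℕ∞) ψ) (hc : ContDiff ℝ (⊤ : ℕ∞) c)
    (hprop : ∀ (i : Fin n) (p : ℝ × (Fin n → ℝ)),
      dt (dt (dy i ψ)) p = c p.1 * dt (dy i ψ) p) :
    ∃ ε > (0 : ℝ), ∃ α : ℝ → ℝ, ∃ h q : (Fin n → ℝ) → ℝ, ∃ f : ℝ → ℝ,
      ContDiffOn ℝ (⊤ : ℕ∞) α (Set.Ioo (-ε) ε) ∧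
      α 0 = 0 ∧
      (∀ t ∈ Set.Ioo (-ε) ε, deriv α t ≠ 0) ∧
      ContDiff ℝ (⊤ : ℕ∞) h ∧ ContDiff ℝ (⊤ : ℕ∞) q ∧ ContDiffOn ℝ (⊤ : ℕ∞) f (Set.Ioo (-ε) ε) ∧
      ∀ t ∈ Set.Ioo (-ε) ε, ∀ y : Fin n → ℝ,
        ψ (α t, y) = t * h y + q y + f t := by
  classical
  have hΨs : ContDiff ℝ (⊤ : ℕ∞) (dt ψ) := contDiff_dt ψ hψ
  -- the integrating factor
  set B : ℝ → ℝ := fun t => ∫ s in (0:ℝ)..t, c s with hBdef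
  have hBd : ∀ t, HasDerivAt B (c t) t := fun t => hasDerivAt_intervalIntegral hc.continuous t
  have hB0 : B 0 = 0 := intervalIntegral.integral_same
  have hBs : ContDiff ℝ (⊤ : ℕ∞) B := contDiff_primitive hc
  set E : ℝ → ℝ := fun t => Real.exp (B t) with hEdef
  have hEs : ContDiff ℝ (⊤ : ℕ∞) E := Real.contDiff_exp.comp hBs
  have hEpos : ∀ t, 0 < E t := fun t => Real.exp_pos _
  have hE0 : E 0 = 1 := by rw [hEdef]; simp [hB0]
  -- Step 1 : the mixed partials satisfy the ODE, hence are multiples of `E`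
  have step1 : ∀ (i : Fin n) (t : ℝ) (y : Fin n → ℝ),
      dt (dy i ψ) (t, y) = E t * dt (dy i ψ) (0, y) := by
    intro i t y
    have hu : ∀ s, HasDerivAt (fun r => dt (dy i ψ) (r, y))
        (c s * dt (dy i ψ) (s, y)) s := by
      intro s
      have h1 := myHasDerivAt_fst (dt (dy i ψ)) (contDiff_dt _ (contDiff_dy i ψ hψ)) s y
      rw [hprop i (s, y)] at h1
      exact h1
    exact ode_exp hu hBd hB0 t
  -- Step 2 : dt ψ (t,y) = E t * dt ψ (0,y) + k t
  have step2 : ∀ (t : ℝ) (y : Fin n → ℝ),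
      dt ψ (t, y) - E t * dt ψ (0, y) = dt ψ (t, 0) - E t * dt ψ (0, 0) := by
    intro t y
    have hdiff : ∀ z : Fin n → ℝ, HasFDerivAt (fun w => dt ψ (t, w) - E t * dt ψ (0, w))
        (((fderiv ℝ (dt ψ) (t, z)).comp (ContinuousLinearMap.inr ℝ ℝ (Fin n → ℝ)))
          - E t • ((fderiv ℝ (dt ψ) (0, z)).comp (ContinuousLinearMap.inr ℝ ℝ (Fin n → ℝ)))) z := by
      intro z
      exact (myHasFDerivAt_snd (dt ψ) hΨs t z).sub
        ((myHasFDerivAt_snd (dt ψ) hΨs 0 z).const_mul (E t))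
    have hzero : ∀ z : Fin n → ℝ,
        (((fderiv ℝ (dt ψ) (t, z)).comp (ContinuousLinearMap.inr ℝ ℝ (Fin n → ℝ)))
          - E t • ((fderiv ℝ (dt ψ) (0, z)).comp (ContinuousLinearMap.inr ℝ ℝ (Fin n → ℝ))))
          = 0 := by
      intro z
      apply ContinuousLinearMap.coe_injective
      apply Module.Basis.ext (Pi.basisFun ℝ (Fin n))
      intro i
      have key : dy i (dt ψ) (t, z) = E t * dy i (dt ψ) (0, z) := by
        rw [← dt_dy_comm ψ hψ i (t, z), ← dt_dy_comm ψ hψ i (0, z)]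
        exact step1 i t z
      simp only [Pi.basisFun_apply, ContinuousLinearMap.coe_sub', ContinuousLinearMap.coe_smul',
        ContinuousLinearMap.coe_comp', LinearMap.coe_toContinuousLinearMap', Pi.sub_apply,
        Pi.smul_apply, Function.comp_apply, ContinuousLinearMap.inr_apply, smul_eq_mul,
        LinearMap.zero_apply, ContinuousLinearMap.coe_coe]
      have e1 : fderiv ℝ (dt ψ) (t, z) ((0:ℝ), Pi.single i 1) = dy i (dt ψ) (t, z) := rfl
      have e2 : fderiv ℝ (dt ψ) (0, z) ((0:ℝ), Pi.single i 1) = dy i (dt ψ) (0, z) := rfl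
      rw [e1, e2, key]
      simp
    have hconst := is_const_of_fderiv_eq_zero (𝕜 := ℝ)
      (fun z => (hdiff z).differentiableAt)
      (fun z => by rw [(hdiff z).fderiv]; exact hzero z) y 0
    exact hconst
  -- names for the pieces
  set G : (Fin n → ℝ) → ℝ := fun y => dt ψ (0, y) with hGdef
  set k : ℝ → ℝ := fun t => dt ψ (t, 0) - E t * G 0 with hkdef
  have hΨrep : ∀ (t : ℝ) (y : Fin n → ℝ), dt ψ (t, y) = E t * G y + k t := by
    intro t y
    have := step2 t y
    rw [hkdef, hGdef]
    simp only
    linarith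
  have hGs : ContDiff ℝ (⊤ : ℕ∞) G := hΨs.comp (contDiff_const.prodMk contDiff_id)
  have hks : ContDiff ℝ (⊤ : ℕ∞) k := by
    have h1 : ContDiff ℝ (⊤ : ℕ∞) (fun t => dt ψ (t, (0 : Fin n → ℝ))) :=
      hΨs.comp (contDiff_id.prodMk contDiff_const)
    exact h1.sub (hEs.mul contDiff_const)
  -- antiderivatives
  set A : ℝ → ℝ := fun t => ∫ s in (0:ℝ)..t, E s with hAdef
  set K : ℝ → ℝ := fun t => ∫ s in (0:ℝ)..t, k s with hKdef
  have hAd : ∀ t, HasDerivAt A (E t) t := fun t => hasDerivAt_intervalIntegral hEs.continuous t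
  have hKd : ∀ t, HasDerivAt K (k t) t := fun t => hasDerivAt_intervalIntegral hks.continuous t
  have hAs : ContDiff ℝ (⊤ : ℕ∞) A := contDiff_primitive hEs
  have hKs : ContDiff ℝ (⊤ : ℕ∞) K := contDiff_primitive hks
  have hA0 : A 0 = 0 := intervalIntegral.integral_same
  have hK0 : K 0 = 0 := intervalIntegral.integral_same
  -- Step 4 : the global representation of ψ
  have hψrep : ∀ (t : ℝ) (y : Fin n → ℝ), ψ (t, y) = ψ (0, y) + A t * G y + K t := by
    intro t y
    have hg : ∀ s, HasDerivAt (fun r => ψ (r, y) - (A r * G y + K r)) 0 s := by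
      intro s
      have h1 := myHasDerivAt_fst ψ hψ s y
      have h2 := ((hAd s).mul_const (G y)).fun_add (hKd s)
      have h3 := h1.fun_sub h2
      refine h3.congr_deriv ?_
      rw [hΨrep s y]
      ring
    have hcst := is_const_of_deriv_eq_zero (fun s => (hg s).differentiableAt)
      (fun s => (hg s).deriv) t 0
    rw [hA0, hK0] at hcst
    simp only [zero_mul, add_zero, sub_zero] at hcst
    linarith
  -- Step 5 : invert A near 0
  have hAc : ContDiffAt ℝ (⊤ : ℕ∞) A 0 := hAs.contDiffAt
  have hstrict : HasStrictDerivAt A (E 0) 0 := by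
    have := hAc.hasStrictDerivAt (by simp)
    rwa [(hAd 0).deriv] at this
  have hne : E 0 ≠ 0 := ne_of_gt (hEpos 0)
  have hSF := hstrict.hasStrictFDerivAt_equiv hne
  set φ := hSF.toOpenPartialHomeomorph A with hφdef
  have hcoe : (φ : ℝ → ℝ) = A := rfl
  have h0src : (0 : ℝ) ∈ φ.source := hSF.mem_toOpenPartialHomeomorph_source
  have h0tgt : (0 : ℝ) ∈ φ.target := by
    have := hSF.image_mem_toOpenPartialHomeomorph_target
    rwa [show A 0 = 0 from hA0] at this
  set α : ℝ → ℝ := (φ.symm : ℝ → ℝ) with hαdef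
  obtain ⟨ε, hε, hball⟩ : ∃ ε > (0:ℝ), Set.Ioo (-ε) ε ⊆ φ.target := by
    have hmem : φ.target ∈ 𝓝 (0 : ℝ) := φ.open_target.mem_nhds h0tgt
    obtain ⟨ε, hε, hsub⟩ := Metric.mem_nhds_iff.1 hmem
    refine ⟨ε, hε, fun x hx => hsub ?_⟩
    rw [Real.ball_eq_Ioo]
    simpa using hx
  have hαA : ∀ t ∈ φ.target, A (α t) = t := by
    intro t ht
    have := φ.right_inv ht
    rwa [hcoe] at this
  have hα0 : α 0 = 0 := by
    have := φ.left_inv h0src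
    rw [hcoe, hA0] at this
    exact this
  have hαc : ∀ t ∈ φ.target, ContDiffAt ℝ (⊤ : ℕ∞) α t := by
    intro t ht
    refine φ.contDiffAt_symm_deriv (f₀' := E (α t)) (ne_of_gt (hEpos _)) ht ?_ ?_
    · rw [hcoe]; exact hAd (α t)
    · rw [hcoe]; exact hAs.contDiffAt
  have hαd : ∀ t ∈ φ.target, E (α t) * deriv α t = 1 := by
    intro t ht
    have hdα : HasDerivAt α (deriv α t) t :=
      (((hαc t ht).differentiableAt (by simp))).hasDerivAt
    have hcomp : HasDerivAt (fun x => A (α x)) (E (α t) * deriv α t) t :=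
      (hAd (α t)).comp t hdα
    have hid : HasDerivAt (fun x => A (α x)) 1 t := by
      have hev : (fun x => A (α x)) =ᶠ[𝓝 t] id := by
        filter_upwards [φ.open_target.mem_nhds ht] with x hx using hαA x hx
      exact (hasDerivAt_id t).congr_of_eventuallyEq hev
    have := hcomp.unique hid
    simpa using this
  refine ⟨ε, hε, α, G, (fun y => ψ (0, y)), K ∘ α, ?_, hα0, ?_, hGs, ?_, ?_, ?_⟩
  · exact fun t ht => (hαc t (hball ht)).contDiffWithinAt
  · intro t ht h0
    have := hαd t (hball ht)
    rw [h0, mul_zero] at this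
    exact zero_ne_one this
  · exact hψ.comp (contDiff_const.prodMk contDiff_id)
  · exact fun t ht => (hKs.contDiffAt.comp t (hαc t (hball ht))).contDiffWithinAt
  · intro t ht y
    have hrep := hψrep (α t) y
    rw [hαA t (hball ht)] at hrep
    rw [hrep]
    simp only [Function.comp_apply]
    ring
end

section
/- Let d ≥ 2, let z̃ ∈ ℝ^{d−1}, and let L ⊂ ℝᵈ be an affine line passing through the point (z̃, 0) that is not contained in the hyperplane {x_d = 0}. Define F(x̃, x_d) = (x̃/x_d, 1/x_d) on {x_d ≠ 0}. Then there exists a point v₀ ∈ ℝᵈ such that F(L ∖ {x : x_d = 0}) ⊆ {v₀ + s·(z̃, 1) : s ∈ ℝ}; that is, F maps the punctured line L onto part of a line whose direction vector is (z̃, 1), determined only by the passing point (z̃, 0). -/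
/-- The projective transformation `F(x̃, x_d) = (x̃/x_d, 1/x_d)`, defined away from the
hyperplane `{x_d = 0}`. -/
noncomputable def projF (d : ℕ) (p : (Fin (d - 1) → ℝ) × ℝ) : (Fin (d - 1) → ℝ) × ℝ :=
  (p.2⁻¹ • p.1, p.2⁻¹)

/-- `F` maps an affine line through the point `(z̃, 0)` (not contained in the hyperplane
`{x_d = 0}`) into a line with direction vector `(z̃, 1)`. -/
theorem projF_maps_lines_through_hyperplane_point_to_direction
    (d : ℕ) (hd : 2 ≤ d) (z : Fin (d - 1) → ℝ)
    (L : AffineSubspace ℝ ((Fin (d - 1) → ℝ) × ℝ))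
    (hline : Module.finrank ℝ L.direction = 1)
    (hthrough : ((z, (0 : ℝ)) : (Fin (d - 1) → ℝ) × ℝ) ∈ L)
    (hnot : ∃ p ∈ L, p.2 ≠ 0) :
    ∃ v₀ : (Fin (d - 1) → ℝ) × ℝ,
      ∀ p ∈ L, p.2 ≠ 0 → ∃ s : ℝ, projF d p = v₀ + s • ((z, (1 : ℝ)) : (Fin (d - 1) → ℝ) × ℝ) := by
  obtain ⟨p₀, hp₀L, hp₀⟩ := hnot
  set w : (Fin (d - 1) → ℝ) × ℝ := p₀ - (z, (0 : ℝ)) with hw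
  have hwmem : w ∈ L.direction := AffineSubspace.vsub_mem_direction hp₀L hthrough
  have hw2 : w.2 = p₀.2 := by simp [hw]
  have hwne : w ≠ 0 := by
    intro h
    apply hp₀
    rw [← hw2, h]; rfl
  have hspan : Submodule.span ℝ {w} = L.direction := by
    apply Submodule.eq_of_le_of_finrank_le
    · exact Submodule.span_le.2 (Set.singleton_subset_iff.2 hwmem)
    · rw [hline, finrank_span_singleton hwne]
  refine ⟨((w.2)⁻¹ • w.1, 0), ?_⟩
  intro p hpL hp2
  have hmem : p - (z, (0 : ℝ)) ∈ L.direction := AffineSubspace.vsub_mem_direction hpL hthrough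
  rw [← hspan, Submodule.mem_span_singleton] at hmem
  obtain ⟨t, ht⟩ := hmem
  have hp : p = t • w + (z, (0 : ℝ)) := by
    rw [ht]; abel
  have hp2' : p.2 = t * w.2 := by rw [hp]; simp
  have hwnz : w.2 ≠ 0 := by
    intro h; apply hp2; rw [hp2', h, mul_zero]
  have htnz : t ≠ 0 := by
    intro h; apply hp2; rw [hp2', h, zero_mul]
  refine ⟨(t * w.2)⁻¹, ?_⟩
  have hp1 : p.1 = t • w.1 + z := by rw [hp]; simp
  unfold projF
  rw [hp2', hp1]
  ext <;> simp [mul_inv, Prod.add_def] <;> field_simp <;> ring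
end
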